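/- Let K/k be a field extension and f a k-algebra automorphism of K of finite order d that fixes k pointwise. If K is generated over k by elements t_1, ..., t_e, and S is the subfield of K generated over k by all elementary symmetric polynomials s_j(t_i, f(t_i), ..., f^{d-1}(t_i)) for 1 ≤ i ≤ e and 1 ≤ j ≤ d, then the degree [K : S] is finite and at most d^e. -/
import Mathlib

open Polynomial IntermediateField

/-- Auxiliary induction: if `K` is generated over `F` by `n` elements, each a root of a
monic polynomial over `F` of degree at most `d`, then `[K : F]` is finite and `≤ d ^ n`. -/
theorem aux_tower {K : Type u} [Field K] (d : ℕ) (n : ℕ) :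
    ∀ (F : Type u) [Field F] [Algebra F K] (t : Fin n → K),
      (∀ i, ∃ p : Polynomial F, p.Monic ∧ p.natDegree ≤ d ∧ Polynomial.aeval (t i) p = 0) →
      IntermediateField.adjoin F (Set.range t) = ⊤ →
      FiniteDimensional F K ∧ Module.finrank F K ≤ d ^ n := by
  induction n with
  | zero =>
    intro F _ _ t _ htop
    have hrange : Set.range t = ∅ := Set.range_eq_empty t
    rw [hrange, IntermediateField.adjoin_empty] at htop
    have hsurj : Function.Surjective (algebraMap F K) := by
      intro x
      have hx : x ∈ (⊥ : IntermediateField F K) := htop ▸ IntermediateField.mem_top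
      rwa [IntermediateField.mem_bot] at hx
    have e : F ≃ₗ[F] K :=
      LinearEquiv.ofBijective (Algebra.linearMap F K)
        ⟨(algebraMap F K).injective, hsurj⟩
    have hfin : FiniteDimensional F K := Module.Finite.equiv e
    refine ⟨hfin, ?_⟩
    rw [pow_zero, ← e.finrank_eq, Module.finrank_self]
  | succ n ih =>
    intro F _ _ t hp htop
    obtain ⟨p, hpm, hpd, hproot⟩ := hp 0
    have hint : IsIntegral F (t 0) := ⟨p, hpm, by rwa [Polynomial.aeval_def] at hproot⟩
    haveI hFD : FiniteDimensional F F⟮t 0⟯ := IntermediateField.adjoin.finiteDimensional hint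
    have hfr : Module.finrank F F⟮t 0⟯ ≤ d := by
      rw [IntermediateField.adjoin.finrank hint]
      exact le_trans (Polynomial.natDegree_le_of_dvd (minpoly.dvd F (t 0) hproot)
        hpm.ne_zero) hpd
    -- the remaining generators over F⟮t 0⟯
    set t' : Fin n → K := t ∘ Fin.succ with ht'
    have hp' : ∀ i, ∃ q : Polynomial F⟮t 0⟯, q.Monic ∧ q.natDegree ≤ d ∧
        Polynomial.aeval (t' i) q = 0 := by
      intro i
      obtain ⟨q, hqm, hqd, hqroot⟩ := hp i.succ
      exact ⟨q.map (algebraMap F F⟮t 0⟯), hqm.map _,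
        le_trans (Polynomial.natDegree_map_le) hqd,
        by rwa [Polynomial.aeval_map_algebraMap]⟩
    have hrange : Set.range t = {t 0} ∪ Set.range t' := by
      rw [Set.singleton_union, ht']
      conv_lhs => rw [← Fin.cons_self_tail t]
      rw [Fin.range_cons]
      rfl
    have htop' : IntermediateField.adjoin F⟮t 0⟯ (Set.range t') = ⊤ := by
      apply IntermediateField.restrictScalars_injective F
      rw [IntermediateField.restrictScalars_top]
      rw [IntermediateField.adjoin_adjoin_left, ← hrange]
      exact htop
    obtain ⟨hfin', hrank'⟩ := ih F⟮t 0⟯ t' hp' htop'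
    haveI := hfin'
    haveI hfin : FiniteDimensional F K := Module.Finite.trans F⟮t 0⟯ K
    refine ⟨hfin, ?_⟩
    calc Module.finrank F K = Module.finrank F F⟮t 0⟯ * Module.finrank F⟮t 0⟯ K :=
          (Module.finrank_mul_finrank F F⟮t 0⟯ K).symm
      _ ≤ d * d ^ n := Nat.mul_le_mul hfr hrank'
      _ = d ^ (n + 1) := by rw [pow_succ, Nat.mul_comm]

/-- Let `K/k` be a field extension and `f` a `k`-algebra automorphism of `K` of finite
order `d` fixing `k`. If `K = k(t₁, …, t_e)` and `S` is the subfield generated over `k`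
by the values of the elementary symmetric polynomials `s_j` evaluated at the orbit
`t_i, f(t_i), …, f^{d-1}(t_i)`, then `[K : S]` is finite and at most `d ^ e`. -/
theorem stmt0 (k K : Type*) [Field k] [Field K] [Algebra k K]
    (f : K ≃ₐ[k] K) (d e : ℕ) (hd : 0 < d) (hfd : f ^ d = 1)
    (t : Fin e → K)
    (ht : IntermediateField.adjoin k (Set.range t) = ⊤)
    (S : IntermediateField k K)
    (hS : S = IntermediateField.adjoin k
      {x : K | ∃ (i : Fin e) (j : Fin d),
        x = MvPolynomial.eval (fun m : Fin d => (f ^ (m : ℕ)) (t i))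
          (MvPolynomial.esymm (Fin d) K ((j : ℕ) + 1))}) :
    FiniteDimensional S K ∧ Module.finrank S K ≤ d ^ e := by
  -- Top generation over S
  have htopS : IntermediateField.adjoin S (Set.range t) = ⊤ := by
    apply IntermediateField.restrictScalars_injective k
    rw [IntermediateField.restrictScalars_top]
    rw [eq_top_iff, ← ht, IntermediateField.adjoin_le_iff]
    intro x hx
    exact IntermediateField.subset_adjoin S (Set.range t) hx
  -- For each i, build a monic polynomial over S of degree d with root t i
  have hpolys : ∀ i : Fin e, ∃ p : Polynomial S, p.Monic ∧ p.natDegree ≤ d ∧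
      Polynomial.aeval (t i) p = 0 := by
    intro i
    set r : Fin d → K := fun m => (f ^ (m : ℕ)) (t i) with hr
    set q : Polynomial K := ∏ m : Fin d, (X - C (r m)) with hq
    have hqmonic : q.Monic := monic_prod_of_monic _ _ fun m _ => monic_X_sub_C (r m)
    have hqdeg : q.natDegree = d := by
      rw [hq, Polynomial.natDegree_prod_of_monic _ _ fun m _ => monic_X_sub_C (r m)]
      simp
    -- Evaluation of esymm via multisets
    have hesymm : ∀ j : ℕ, (Finset.univ.val.map r).esymm j =
        MvPolynomial.eval r (MvPolynomial.esymm (Fin d) K j) := by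
      intro j
      rw [Finset.esymm_map_val]
      simp [MvPolynomial.esymm, map_sum, map_prod]
    -- all coefficients of q are in S
    have hcard : Multiset.card (Finset.univ.val.map r) = d := by
      simp
    have hqprod : q = ((Finset.univ.val.map r).map fun a => X - C a).prod := by
      rw [hq, Finset.prod_eq_multiset_prod, Multiset.map_map]
      rfl
    have hcoeff : ∀ nn : ℕ, q.coeff nn ∈ S := by
      intro nn
      rcases lt_trichotomy nn d with hlt | heq | hgt
      · have hle : nn ≤ Multiset.card (Finset.univ.val.map r) := by
          rw [hcard]; exact le_of_lt hlt
        have := Multiset.prod_X_sub_C_coeff (Finset.univ.val.map r) hle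
        rw [← hqprod, hcard] at this
        rw [this]
        have hSesymm : MvPolynomial.eval r (MvPolynomial.esymm (Fin d) K (d - nn)) ∈ S := by
          rw [hS]
          apply IntermediateField.subset_adjoin
          refine ⟨i, ⟨d - nn - 1, by omega⟩, ?_⟩
          have harg : ((⟨d - nn - 1, by omega⟩ : Fin d) : ℕ) + 1 = d - nn := by
            simp only [Fin.val_mk]; omega
          rw [harg]
        rw [hesymm]
        exact mul_mem (pow_mem (neg_mem (one_mem S)) _) hSesymm
      · have hc1 : q.coeff nn = 1 := by rw [heq, ← hqdeg]; exact hqmonic.leadingCoeff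
        rw [hc1]
        exact one_mem S
      · rw [Polynomial.coeff_eq_zero_of_natDegree_lt (by omega : q.natDegree < nn)]
        exact zero_mem S
    -- lift q to S
    have hlifts : q ∈ Polynomial.lifts (algebraMap S K) := by
      rw [Polynomial.lifts_iff_coeff_lifts]
      intro nn
      exact ⟨⟨q.coeff nn, hcoeff nn⟩, rfl⟩
    obtain ⟨p, hpmap, hpdeg, hpmonic⟩ :=
      Polynomial.lifts_and_degree_eq_and_monic hlifts hqmonic
    refine ⟨p, hpmonic, ?_, ?_⟩
    · rw [Polynomial.natDegree_eq_of_degree_eq hpdeg, hqdeg]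
    · have hqroot : Polynomial.eval (t i) q = 0 := by
        rw [hq, Polynomial.eval_prod]
        apply Finset.prod_eq_zero (Finset.mem_univ (⟨0, hd⟩ : Fin d))
        simp [hr]
      rw [Polynomial.aeval_def, ← Polynomial.eval_map, hpmap, hqroot]
  exact aux_tower d e S t hpolys htopS
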